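/- arXiv:2312.05651 — 4 statements merged into one kernel-verified Lean document; each statement's English description precedes it below -/
import Mathlib

section
/- Let $\|\cdot\|$ be a norm on $\mathbb{R}^d$, $\tau \in (0,1)$, and $R \in (0,1)$. If a convex body $J \subseteq B_1$ satisfies $B_R \subseteq J$ and a point $u$ satisfies $\|u\| \le R(1-\tau)/2$, then $\tau^{-1}(J - u) \cap B_1 \supseteq B_{R_1}$ where $R_1 := \min(R(1+\tau)/(2\tau), 1)$, and moreover $R_1 > R$. -/
open Pointwise Metric

/-!
If `‖x‖ ≤ R(1+τ)/(2τ)` then `‖τx + u‖ ≤ τ‖x‖ + ‖u‖ ≤ R(1+τ)/2 + R(1-τ)/2 = R`, so `τx + u ∈ B_R ⊆ J`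
and `x = τ⁻¹((τx + u) - u) ∈ τ⁻¹(J - u)`. The radius grows because `(1+τ)/(2τ) > 1` for `τ < 1`.
-/

theorem closedBall_subset_inv_smul_image_sub {E : Type*} [NormedAddCommGroup E] [NormedSpace ℝ E]
    {J : Set E} {u : E} {τ r R : ℝ} (hτ : 0 < τ) (hRJ : closedBall (0 : E) R ⊆ J)
    (h : τ * r + ‖u‖ ≤ R) :
    closedBall (0 : E) r ⊆ τ⁻¹ • ((fun x => x - u) '' J) := by
  intro x hx
  rw [mem_closedBall_zero_iff] at hx
  rw [Set.mem_smul_set_iff_inv_smul_mem₀ (inv_ne_zero hτ.ne'), inv_inv]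
  refine ⟨τ • x + u, hRJ ?_, add_sub_cancel_right _ _⟩
  rw [mem_closedBall_zero_iff]
  calc ‖τ • x + u‖ ≤ τ * ‖x‖ + ‖u‖ := by
        simpa only [norm_smul, Real.norm_of_nonneg hτ.le] using norm_add_le (τ • x) u
    _ ≤ τ * r + ‖u‖ := by gcongr
    _ ≤ R := h

theorem lt_mul_one_add_div_two_mul {τ R : ℝ} (hτ : τ ∈ Set.Ioo (0 : ℝ) 1) (hR : 0 < R) :
    R < R * (1 + τ) / (2 * τ) := by
  rw [lt_div_iff₀ (by linarith [hτ.1])]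
  nlinarith [hτ.2]

theorem one_step_expansion_general
    {E : Type*} [NormedAddCommGroup E] [NormedSpace ℝ E]
    (τ R : ℝ) (hτ : τ ∈ Set.Ioo (0:ℝ) 1) (hR : R ∈ Set.Ioo (0:ℝ) 1)
    (J : Set E)
    (hRJ : Metric.closedBall (0 : E) R ⊆ J)
    (u : E) (hu : ‖u‖ ≤ R * (1 - τ) / 2) :
    Metric.closedBall (0 : E) (min (R * (1 + τ) / (2 * τ)) 1)
        ⊆ (τ⁻¹ • ((fun x => x - u) '' J)) ∩ Metric.closedBall 0 1 ∧
      R < min (R * (1 + τ) / (2 * τ)) 1 := by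
  have hradius : τ * (R * (1 + τ) / (2 * τ)) + ‖u‖ ≤ R := by
    have hcancel : τ * (R * (1 + τ) / (2 * τ)) = R * (1 + τ) / 2 := by field_simp [hτ.1.ne']
    linarith
  refine ⟨Set.subset_inter ?_ (closedBall_subset_closedBall (min_le_right _ _)),
    lt_min (lt_mul_one_add_div_two_mul hτ hR.1) hR.2⟩
  exact (closedBall_subset_closedBall (min_le_left _ _)).trans
    (closedBall_subset_inv_smul_image_sub hτ.1 hRJ hradius)

/-- One-step expansion lemma: if the convex body `J ⊆ B_1` contains `B_R` and
`‖u‖ ≤ R(1-τ)/2`, then `τ⁻¹(J - u) ∩ B_1 ⊇ B_{R₁}` with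
`R₁ = min (R(1+τ)/(2τ)) 1 > R`. -/
theorem one_step_expansion
    {E : Type*} [NormedAddCommGroup E] [NormedSpace ℝ E]
    (τ R : ℝ) (hτ : τ ∈ Set.Ioo (0:ℝ) 1) (hR : R ∈ Set.Ioo (0:ℝ) 1)
    (J : Set E) (hJconv : Convex ℝ J) (hJ1 : J ⊆ Metric.closedBall 0 1)
    (hRJ : Metric.closedBall (0 : E) R ⊆ J)
    (u : E) (hu : ‖u‖ ≤ R * (1 - τ) / 2) :
    Metric.closedBall (0 : E) (min (R * (1 + τ) / (2 * τ)) 1)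
        ⊆ (τ⁻¹ • ((fun x => x - u) '' J)) ∩ Metric.closedBall 0 1 ∧
      R < min (R * (1 + τ) / (2 * τ)) 1 :=
  one_step_expansion_general τ R hτ hR J hRJ u hu
end

section
/- Let $d \ge 1$, $\tau \in (0,1)$, $0 < r \le 2^{-d-1}$, $h \ge d+1$, and integers $0 \le i_0 < i_1 < \cdots < i_d \le h$. Then for every $j \in \{0, \ldots, d\}$: $2^j + r \tau^h \sum_{k=0}^{d} 2^k \tau^{-i_k} \le 1 + \tau^{i_j} \sum_{k=0}^{j} 2^k \tau^{-i_k}$. -/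
/-! As `i` is increasing, `i k ≤ i d ≤ h`, so each term `τ ^ h * 2 ^ k * τ⁻¹ ^ (i k)` is at most
`2 ^ k`. Hence `τ ^ h ∑_{k ≤ d} 2 ^ k τ⁻¹ ^ (i k) ≤ 2 ^ (d + 1) - 1`, and the `r`-term on the left
is at most `1`.
On the right, the `k = j` term of the sum alone contributes `τ ^ (i j) * 2 ^ j * τ⁻¹ ^ (i j) = 2 ^ j`. -/

open Finset

lemma pow_mul_inv_pow_le_one {τ : ℝ} (hτ0 : 0 < τ) (hτ1 : τ ≤ 1) {a h : ℕ} (ha : a ≤ h) :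
    τ ^ h * τ⁻¹ ^ a ≤ 1 :=
  calc τ ^ h * τ⁻¹ ^ a ≤ τ ^ a * τ⁻¹ ^ a :=
        mul_le_mul_of_nonneg_right (pow_le_pow_of_le_one hτ0.le hτ1 ha) (by positivity)
    _ = 1 := by rw [← mul_pow, mul_inv_cancel₀ hτ0.ne', one_pow]

lemma geom_sum_two_eq (n : ℕ) : ∑ k ∈ range n, (2 : ℝ) ^ k = 2 ^ n - 1 := by
  rw [geom_sum_eq (by norm_num) n]
  norm_num

lemma pow_mul_sum_two_pow_mul_inv_pow_le {τ : ℝ} (hτ0 : 0 < τ) (hτ1 : τ ≤ 1) {h n : ℕ}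
    {i : ℕ → ℕ} (hi : ∀ k < n, i k ≤ h) :
    τ ^ h * ∑ k ∈ range n, (2 : ℝ) ^ k * τ⁻¹ ^ (i k) ≤ 2 ^ n - 1 := by
  rw [← geom_sum_two_eq, mul_sum]
  refine sum_le_sum fun k hk => ?_
  calc τ ^ h * ((2 : ℝ) ^ k * τ⁻¹ ^ (i k)) = 2 ^ k * (τ ^ h * τ⁻¹ ^ (i k)) := by ring
    _ ≤ 2 ^ k * 1 := by
        gcongr
        exact pow_mul_inv_pow_le_one hτ0 hτ1 (hi k (mem_range.mp hk))
    _ = 2 ^ k := mul_one _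

lemma mul_pow_mul_sum_two_pow_mul_inv_pow_le_one {τ r : ℝ} (hτ0 : 0 < τ) (hτ1 : τ ≤ 1)
    {h d : ℕ} (hr : r ≤ ((2 : ℝ) ^ (d + 1))⁻¹) {i : ℕ → ℕ} (hi : ∀ k ≤ d, i k ≤ h) :
    r * τ ^ h * ∑ k ∈ range (d + 1), (2 : ℝ) ^ k * τ⁻¹ ^ (i k) ≤ 1 := by
  set S := τ ^ h * ∑ k ∈ range (d + 1), (2 : ℝ) ^ k * τ⁻¹ ^ (i k)
  have hS_nonneg : 0 ≤ S := by positivity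
  have hS_le : S ≤ 2 ^ (d + 1) :=
    (pow_mul_sum_two_pow_mul_inv_pow_le hτ0 hτ1 fun k hk => hi k (Nat.le_of_lt_succ hk)).trans
      (sub_le_self _ zero_le_one)
  calc r * τ ^ h * ∑ k ∈ range (d + 1), (2 : ℝ) ^ k * τ⁻¹ ^ (i k) = r * S := mul_assoc _ _ _
    _ ≤ ((2 : ℝ) ^ (d + 1))⁻¹ * S := mul_le_mul_of_nonneg_right hr hS_nonneg
    _ ≤ 1 := inv_mul_le_one_of_le₀ hS_le (by positivity)

lemma two_pow_le_pow_mul_sum_two_pow_mul_inv_pow {τ : ℝ} (hτ0 : 0 < τ) (i : ℕ → ℕ) (j : ℕ) :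
    (2 : ℝ) ^ j ≤ τ ^ (i j) * ∑ k ∈ range (j + 1), (2 : ℝ) ^ k * τ⁻¹ ^ (i k) := by
  have hj_term : τ ^ (i j) * ((2 : ℝ) ^ j * τ⁻¹ ^ (i j)) = 2 ^ j := by
    rw [mul_left_comm, ← mul_pow, mul_inv_cancel₀ hτ0.ne', one_pow, mul_one]
  rw [← hj_term]
  gcongr
  exact single_le_sum (f := fun k => (2 : ℝ) ^ k * τ⁻¹ ^ (i k)) (fun k _ => by positivity)
    (self_mem_range_succ j)

theorem key_inequality_general
    (d : ℕ) (τ : ℝ) (hτ : τ ∈ Set.Ioo (0:ℝ) 1)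
    (r : ℝ) (hr : r ≤ ((2:ℝ) ^ (d + 1))⁻¹)
    (h : ℕ)
    (i : ℕ → ℕ) (hmono : ∀ k < d, i k < i (k + 1)) (hih : i d ≤ h) :
    ∀ j ≤ d,
      (2:ℝ) ^ j + r * τ ^ h * ∑ k ∈ Finset.range (d + 1), (2:ℝ) ^ k * (τ⁻¹) ^ (i k)
        ≤ 1 + τ ^ (i j) * ∑ k ∈ Finset.range (j + 1), (2:ℝ) ^ k * (τ⁻¹) ^ (i k) := by
  obtain ⟨hτ0, hτ1⟩ := hτ
  intro j _
  have hi_le : ∀ k ≤ d, i k ≤ h := fun k hk =>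
    ((strictMonoOn_Iic_of_lt_succ hmono).monotoneOn hk Set.self_mem_Iic hk).trans hih
  have hr_term := mul_pow_mul_sum_two_pow_mul_inv_pow_le_one hτ0 hτ1.le hr hi_le
  have hj_term := two_pow_le_pow_mul_sum_two_pow_mul_inv_pow hτ0 i j
  linarith

/-- The key combinatorial inequality (equation (16) of the paper):
for `d ≥ 1`, `τ ∈ (0,1)`, `0 < r ≤ 2^{-(d+1)}`, `h ≥ d+1` and
`0 ≤ i₀ < i₁ < ⋯ < i_d ≤ h`, for every `j ≤ d`:
`2^j + r τ^h ∑_{k=0}^d 2^k τ^{-i_k} ≤ 1 + τ^{i_j} ∑_{k=0}^j 2^k τ^{-i_k}`. -/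
theorem key_inequality
    (d : ℕ) (hd : 1 ≤ d) (τ : ℝ) (hτ : τ ∈ Set.Ioo (0:ℝ) 1)
    (r : ℝ) (hr0 : 0 < r) (hr : r ≤ ((2:ℝ) ^ (d + 1))⁻¹)
    (h : ℕ) (hh : d + 1 ≤ h)
    (i : ℕ → ℕ) (hmono : ∀ k < d, i k < i (k + 1)) (hih : i d ≤ h) :
    ∀ j ≤ d,
      (2:ℝ) ^ j + r * τ ^ h * ∑ k ∈ Finset.range (d + 1), (2:ℝ) ^ k * (τ⁻¹) ^ (i k)
        ≤ 1 + τ ^ (i j) * ∑ k ∈ Finset.range (j + 1), (2:ℝ) ^ k * (τ⁻¹) ^ (i k) :=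
  key_inequality_general d τ hτ r hr h i hmono hih
end

section
/- Let $d \ge 1$, $\tau \in (0,1)$, $h \ge d+1$, $r \le 2^{-d-1}$, and integers $1 \le i_0 < i_1 < \cdots < i_d \le h$. Let $v_0, v_1, \ldots, v_d \in \mathbb{R}^d$ (with an arbitrary norm) satisfy $\|v_k - v_l\| \le \tau^{\min(i_k, i_l)}$ for all $k, l$. With $\lambda_j := 2^j \tau^{-i_j}/\sum_{k=0}^d 2^k \tau^{-i_k}$, the convex combination $w := \sum_{k=0}^d \lambda_k v_k$ satisfies $\|w - v_j\| \le \tau^{i_j} - r \tau^h$ for every $j = 0, \ldots, d$. Consequently, $-w \in \bigcap_{j=0}^d \big(B_{\tau^{i_j} - r\tau^h} - v_j\big)$, so this intersection of $d+1$ translated balls is nonempty. -/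
/-!
By the triangle inequality `‖w - v j‖ ≤ S⁻¹ ∑_{k ≠ j} f k τ^{min (i k) (i j)}`, where
`f k = 2 ^ k τ^{-i k}` and `S = ∑ f k`. A term with `k < j` equals `2 ^ k` and one with `k > j`
equals `f k τ^{i j}`; since `∑_{k < j} 2 ^ k = 2 ^ j - 1 = f j τ^{i j} - 1`, the sum is at most
`S τ^{i j} - 1`. Finally `S ≤ 2 ^ (d + 1) τ^{-h}` because every `i k ≤ h`, so `1 / S ≥ r τ^h`.
-/

open Finset

theorem norm_sum_smul_sub_le {ι E : Type*} [SeminormedAddCommGroup E] [NormedSpace ℝ E]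
    {s : Finset ι} {a : ι → ℝ} (ha : ∀ k ∈ s, 0 ≤ a k) (hsum : ∑ k ∈ s, a k = 1)
    (v : ι → E) (x : E) :
    ‖∑ k ∈ s, a k • v k - x‖ ≤ ∑ k ∈ s, a k * ‖v k - x‖ := by
  have hsub : ∑ k ∈ s, a k • v k - x = ∑ k ∈ s, a k • (v k - x) := by
    simp only [smul_sub, sum_sub_distrib, ← sum_smul, hsum, one_smul]
  rw [hsub]
  refine (norm_sum_le _ _).trans (sum_le_sum fun k hk => ?_)
  rw [norm_smul, Real.norm_of_nonneg (ha k hk)]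

theorem neg_mem_image_sub_closedBall {E : Type*} [SeminormedAddCommGroup E] {w x : E} {ρ : ℝ}
    (h : ‖w - x‖ ≤ ρ) : -w ∈ (fun y => y - x) '' Metric.closedBall (0 : E) ρ :=
  ⟨x - w, by rwa [mem_closedBall_zero_iff, norm_sub_rev], sub_sub_cancel_left x w⟩

noncomputable def hellyWeightSum (τ : ℝ) (i : ℕ → ℕ) (d : ℕ) : ℝ :=
  ∑ k ∈ range (d + 1), 2 ^ k * τ⁻¹ ^ i k

noncomputable def hellyWeight (τ : ℝ) (i : ℕ → ℕ) (d k : ℕ) : ℝ :=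
  2 ^ k * τ⁻¹ ^ i k / hellyWeightSum τ i d

section Weights

variable {τ : ℝ} {i : ℕ → ℕ} {d : ℕ}

theorem hellyWeightSum_pos (hτ : 0 < τ) : 0 < hellyWeightSum τ i d :=
  sum_pos (fun _ _ => by positivity) nonempty_range_add_one

theorem hellyWeight_nonneg (hτ : 0 < τ) (k : ℕ) : 0 ≤ hellyWeight τ i d k :=
  div_nonneg (by positivity) (hellyWeightSum_pos hτ).le

theorem sum_hellyWeight (hτ : 0 < τ) : ∑ k ∈ range (d + 1), hellyWeight τ i d k = 1 := by
  simp only [hellyWeight, ← sum_div]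
  exact div_self (hellyWeightSum_pos hτ).ne'

theorem two_pow_mul_inv_pow_mul_pow (hτ : τ ≠ 0) (k n : ℕ) :
    (2 : ℝ) ^ k * τ⁻¹ ^ n * τ ^ n = 2 ^ k := by
  rw [mul_assoc, inv_pow, inv_mul_cancel₀ (pow_ne_zero _ hτ), mul_one]

theorem sum_erase_mul_pow_min_add_one_le (hτ : 0 < τ) (hi : StrictMonoOn i (Set.Iic d))
    {j : ℕ} (hj : j ≤ d) :
    ∑ k ∈ (range (d + 1)).erase j, 2 ^ k * τ⁻¹ ^ i k * τ ^ min (i k) (i j) + 1 ≤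
      hellyWeightSum τ i d * τ ^ i j := by
  have termwise : ∀ k ∈ (range (d + 1)).erase j, (2 : ℝ) ^ k * τ⁻¹ ^ i k * τ ^ min (i k) (i j)
      ≤ 2 ^ k * τ⁻¹ ^ i k * τ ^ i j + if k < j then 2 ^ k else 0 := by
    intro k hk
    obtain ⟨hkj, hkd⟩ := mem_erase.mp hk
    have hkd : k ≤ d := Nat.lt_succ_iff.mp (mem_range.mp hkd)
    rcases hkj.lt_or_gt with hlt | hgt
    · rw [min_eq_left (hi hkd hj hlt).le, two_pow_mul_inv_pow_mul_pow hτ.ne', if_pos hlt]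
      have : (0 : ℝ) ≤ 2 ^ k * τ⁻¹ ^ i k * τ ^ i j := by positivity
      linarith
    · rw [min_eq_right (hi hj hkd hgt).le, if_neg hgt.not_gt, add_zero]
  have below_j : ∑ k ∈ (range (d + 1)).erase j, (if k < j then (2 : ℝ) ^ k else 0) ≤ 2 ^ j - 1 :=
    calc _ = ∑ k ∈ ((range (d + 1)).erase j).filter (· < j), (2 : ℝ) ^ k := (sum_filter _ _).symm
      _ ≤ ∑ k ∈ range j, (2 : ℝ) ^ k :=
        sum_le_sum_of_subset_of_nonneg (fun k hk => mem_range.mpr (mem_filter.mp hk).2)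
          fun _ _ _ => by positivity
      _ = 2 ^ j - 1 := by rw [geom_sum_eq (by norm_num)]; norm_num
  have split_j : hellyWeightSum τ i d * τ ^ i j =
      ∑ k ∈ (range (d + 1)).erase j, 2 ^ k * τ⁻¹ ^ i k * τ ^ i j + 2 ^ j := by
    rw [hellyWeightSum, sum_mul, ← sum_erase_add _ _ (mem_range.mpr (Nat.lt_succ_of_le hj)),
      two_pow_mul_inv_pow_mul_pow hτ.ne']
  have summed := sum_le_sum termwise
  rw [sum_add_distrib] at summed
  linarith

theorem hellyWeightSum_mul_pow_le (hτ₀ : 0 < τ) (hτ₁ : τ ≤ 1) {h : ℕ} (hih : ∀ k ≤ d, i k ≤ h) :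
    hellyWeightSum τ i d * τ ^ h ≤ 2 ^ (d + 1) :=
  calc hellyWeightSum τ i d * τ ^ h
      ≤ ∑ k ∈ range (d + 1), (2 : ℝ) ^ k * τ⁻¹ ^ i k * τ ^ i k := by
        rw [hellyWeightSum, sum_mul]
        refine sum_le_sum fun k hk => mul_le_mul_of_nonneg_left ?_ (by positivity)
        exact pow_le_pow_of_le_one hτ₀.le hτ₁ (hih k (Nat.lt_succ_iff.mp (mem_range.mp hk)))
    _ = 2 ^ (d + 1) - 1 := by
        simp only [two_pow_mul_inv_pow_mul_pow hτ₀.ne']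
        rw [geom_sum_eq (by norm_num)]
        norm_num
    _ ≤ 2 ^ (d + 1) := by linarith

theorem inv_two_pow_mul_pow_le_inv_hellyWeightSum (hτ₀ : 0 < τ) (hτ₁ : τ ≤ 1) {h : ℕ}
    (hih : ∀ k ≤ d, i k ≤ h) : ((2 : ℝ) ^ (d + 1))⁻¹ * τ ^ h ≤ (hellyWeightSum τ i d)⁻¹ := by
  rw [inv_mul_le_iff₀ (by positivity), le_mul_inv_iff₀ (hellyWeightSum_pos hτ₀), mul_comm]
  exact hellyWeightSum_mul_pow_le hτ₀ hτ₁ hih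

theorem norm_sum_hellyWeight_smul_sub_le {E : Type*} [SeminormedAddCommGroup E]
    [NormedSpace ℝ E] (hτ : 0 < τ) (hi : StrictMonoOn i (Set.Iic d)) {v : ℕ → E}
    (hv : ∀ k ≤ d, ∀ l ≤ d, ‖v k - v l‖ ≤ τ ^ min (i k) (i l)) {j : ℕ} (hj : j ≤ d) :
    ‖∑ k ∈ range (d + 1), hellyWeight τ i d k • v k - v j‖ ≤
      τ ^ i j - (hellyWeightSum τ i d)⁻¹ := by
  have hS := hellyWeightSum_pos (i := i) (d := d) hτ
  calc _ ≤ ∑ k ∈ range (d + 1), hellyWeight τ i d k * ‖v k - v j‖ :=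
        norm_sum_smul_sub_le (fun k _ => hellyWeight_nonneg hτ k) (sum_hellyWeight hτ) v (v j)
    _ = ∑ k ∈ (range (d + 1)).erase j, hellyWeight τ i d k * ‖v k - v j‖ :=
        (sum_erase _ (by rw [sub_self, norm_zero, mul_zero])).symm
    _ ≤ ∑ k ∈ (range (d + 1)).erase j, hellyWeight τ i d k * τ ^ min (i k) (i j) := by
        refine sum_le_sum fun k hk => mul_le_mul_of_nonneg_left ?_ (hellyWeight_nonneg hτ k)
        exact hv k (Nat.lt_succ_iff.mp (mem_range.mp (mem_of_mem_erase hk))) j hj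
    _ = (∑ k ∈ (range (d + 1)).erase j, 2 ^ k * τ⁻¹ ^ i k * τ ^ min (i k) (i j)) /
          hellyWeightSum τ i d := by
        rw [sum_div]
        exact sum_congr rfl fun k _ => div_mul_eq_mul_div _ _ _
    _ ≤ (hellyWeightSum τ i d * τ ^ i j - 1) / hellyWeightSum τ i d := by
        gcongr
        linarith [sum_erase_mul_pow_min_add_one_le hτ hi hj]
    _ = τ ^ i j - (hellyWeightSum τ i d)⁻¹ := by field_simp

end Weights

theorem helly_convex_combination_general
    {E : Type*} [NormedAddCommGroup E] [NormedSpace ℝ E]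
    (d : ℕ) (τ : ℝ) (hτ : τ ∈ Set.Ioo (0:ℝ) 1)
    (h : ℕ) (r : ℝ) (hr : r ≤ ((2:ℝ) ^ (d + 1))⁻¹)
    (i : ℕ → ℕ) (hmono : ∀ k < d, i k < i (k + 1)) (hih : i d ≤ h)
    (v : ℕ → E)
    (hv : ∀ k ≤ d, ∀ l ≤ d, ‖v k - v l‖ ≤ τ ^ (min (i k) (i l))) :
    (∀ j ≤ d,
      ‖(∑ k ∈ Finset.range (d + 1),
          ((2:ℝ) ^ k * (τ⁻¹) ^ (i k) /
            ∑ k' ∈ Finset.range (d + 1), (2:ℝ) ^ k' * (τ⁻¹) ^ (i k')) • v k) - v j‖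
        ≤ τ ^ (i j) - r * τ ^ h) ∧
    (-(∑ k ∈ Finset.range (d + 1),
          ((2:ℝ) ^ k * (τ⁻¹) ^ (i k) /
            ∑ k' ∈ Finset.range (d + 1), (2:ℝ) ^ k' * (τ⁻¹) ^ (i k')) • v k))
      ∈ ⋂ j ∈ Finset.range (d + 1),
          ((fun x => x - v j) '' Metric.closedBall (0 : E) (τ ^ (i j) - r * τ ^ h)) := by
  obtain ⟨hτ₀, hτ₁⟩ := hτ
  have hi : StrictMonoOn i (Set.Iic d) := strictMonoOn_Iic_of_lt_succ hmono
  have hih' : ∀ k ≤ d, i k ≤ h := fun k hk =>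
    (hi.monotoneOn (Set.mem_Iic.mpr hk) (Set.mem_Iic.mpr le_rfl) hk).trans hih
  have hr' : r * τ ^ h ≤ (hellyWeightSum τ i d)⁻¹ :=
    (mul_le_mul_of_nonneg_right hr (by positivity)).trans
      (inv_two_pow_mul_pow_le_inv_hellyWeightSum hτ₀ hτ₁.le hih')
  have key : ∀ j ≤ d, ‖∑ k ∈ range (d + 1), hellyWeight τ i d k • v k - v j‖ ≤
      τ ^ i j - r * τ ^ h := fun j hj =>
    (norm_sum_hellyWeight_smul_sub_le hτ₀ hi hv hj).trans (by linarith)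
  refine ⟨key, Set.mem_iInter₂.mpr fun j hj => ?_⟩
  exact neg_mem_image_sub_closedBall (key j (Nat.lt_succ_iff.mp (mem_range.mp hj)))

/-- Core deterministic estimate of the Helly argument: with weights
`λ_j = 2^j τ^{-i_j}/∑_k 2^k τ^{-i_k}` and points satisfying
`‖v_k - v_l‖ ≤ τ^{min(i_k, i_l)}`, the convex combination
`w = ∑ λ_k v_k` satisfies `‖w - v_j‖ ≤ τ^{i_j} - r τ^h` for all `j ≤ d`;
consequently `-w` belongs to every translated ball `B_{τ^{i_j} - rτ^h} - v_j`. -/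
theorem helly_convex_combination
    {E : Type*} [NormedAddCommGroup E] [NormedSpace ℝ E]
    (d : ℕ) (hd : 1 ≤ d) (τ : ℝ) (hτ : τ ∈ Set.Ioo (0:ℝ) 1)
    (h : ℕ) (hh : d + 1 ≤ h) (r : ℝ) (hr : r ≤ ((2:ℝ) ^ (d + 1))⁻¹)
    (i : ℕ → ℕ) (hi0 : 1 ≤ i 0) (hmono : ∀ k < d, i k < i (k + 1)) (hih : i d ≤ h)
    (v : ℕ → E)
    (hv : ∀ k ≤ d, ∀ l ≤ d, ‖v k - v l‖ ≤ τ ^ (min (i k) (i l))) :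
    (∀ j ≤ d,
      ‖(∑ k ∈ Finset.range (d + 1),
          ((2:ℝ) ^ k * (τ⁻¹) ^ (i k) /
            ∑ k' ∈ Finset.range (d + 1), (2:ℝ) ^ k' * (τ⁻¹) ^ (i k')) • v k) - v j‖
        ≤ τ ^ (i j) - r * τ ^ h) ∧
    (-(∑ k ∈ Finset.range (d + 1),
          ((2:ℝ) ^ k * (τ⁻¹) ^ (i k) /
            ∑ k' ∈ Finset.range (d + 1), (2:ℝ) ^ k' * (τ⁻¹) ^ (i k')) • v k))
      ∈ ⋂ j ∈ Finset.range (d + 1),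
          ((fun x => x - v j) '' Metric.closedBall (0 : E) (τ ^ (i j) - r * τ ^ h)) :=
  helly_convex_combination_general d τ hτ h r hr i hmono hih v hv
end

section
/- (Deterministic core of Proposition 3.3.) Let $\|\cdot\|$ be a norm on $\mathbb{R}^d$, $\tau \in (0,1)$, and let $K$ be a convex body with $B_\varepsilon \subseteq K \subseteq B_1$ for some $\varepsilon > 0$. Set $r := \min(\varepsilon, 1) 2^{-d-1}$. Let $(u_h)_{h \ge 0}$ be any sequence with $u_h \in \widehat{J}_h$ for all $h$, where $\widehat{J}_0 = K$ and $\widehat{J}_{h+1} = \tau^{-1}(\widehat{J}_h - u_h) \cap B_1$. Then for every $h \ge 0$, the set $\widehat{J}_h$ contains a closed ball of radius $r$; equivalently, $\widehat{J}_h \ominus B_r \neq \varnothing$. -/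
/-!
Unrolling the recursion, `τ^h • Ĵ_h` is the intersection of the translates `T_k - v_{h,k}`,
`k ≤ h`, where `T_0 = K`, `T_k = B_{τ^k}` for `k ≥ 1` and `v_{h,k} = ∑_{k ≤ j < h} τ^j u_j`;
the choice `u_j ∈ Ĵ_j` forces `v_{h,i} - v_{h,j} ∈ T_i` for `i ≤ j`, i.e. the "centre" of each
later set lies in every earlier one. Given `m + 1` of these sets, a ball of radius
`min(ε,1) τ^k / (2^{m+1} - 1)` (with `k` the largest index) fits in their intersection: to add the
next ball, apply to the current ball a homothety centred at the new centre, which keeps it inside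
the earlier convex sets (they contain that centre) and costs about a factor 2 in the radius. Since `ρ`-balls inside convex sets form the
convex family `(T_k - v_{h,k}) ⊖ B_ρ`, Helly's theorem upgrades the statement for `d + 1` sets to
all `h + 1` of them.
-/

open Pointwise Metric Finset Module

theorem halving_radius_bounds {μ N R R' : ℝ} (hμ₀ : 0 < μ) (hμ₁ : μ ≤ 1) (hN : 1 ≤ N)
    (hR : 0 < R) (hRR' : R ≤ R') :
    μ * R / (2 * N + 1) ≤ μ * R' / N ∧
      μ * R / (2 * N + 1) * (2 * R' + μ * R' / N) ≤ R * (μ * R' / N) := by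
  have hN₀ : 0 < N := by linarith
  have hR' : 0 < R' := hR.trans_le hRR'
  constructor
  · rw [div_le_div_iff₀ (by positivity) hN₀]
    nlinarith [mul_le_mul_of_nonneg_right (mul_le_mul_of_nonneg_left hRR' hμ₀.le) hN₀.le,
      mul_pos hμ₀ hR']
  · calc μ * R / (2 * N + 1) * (2 * R' + μ * R' / N)
        = R * (μ * R' / N) * ((2 * N + μ) / (2 * N + 1)) := by field_simp
      _ ≤ R * (μ * R' / N) :=
        mul_le_of_le_one_right (by positivity) ((div_le_one (by positivity)).2 (by linarith))

section Geometry

variable {E : Type*} [NormedAddCommGroup E] [NormedSpace ℝ E]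

theorem Convex.closedBall_combo_subset {C : Set E} (hC : Convex ℝ C) {x p : E} {s θ : ℝ}
    (hs : 0 ≤ s) (hθ₀ : 0 ≤ θ) (hθ₁ : θ ≤ 1) (hx : closedBall x s ⊆ C) (hp : p ∈ C) :
    closedBall (θ • x + (1 - θ) • p) (θ * s) ⊆ C := by
  intro z hz
  have hz' : z - (1 - θ) • p ∈ θ • closedBall x s := by
    rwa [_root_.smul_closedBall θ x hs, Real.norm_of_nonneg hθ₀, mem_closedBall,
      ← dist_add_right _ _ ((1 - θ) • p), sub_add_cancel]
  have hz'' := Set.add_mem_add (Set.smul_set_mono hx hz') (Set.smul_mem_smul_set (a := 1 - θ) hp)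
  rw [sub_add_cancel] at hz''
  exact hC.set_combo_subset hθ₀ (sub_nonneg.2 hθ₁) (add_sub_cancel _ _) hz''

theorem Convex.exists_closedBall_subset_inter_closedBall {C : Set E} (hC : Convex ℝ C)
    {x p : E} {s D R ρ : ℝ} (hx : closedBall x s ⊆ C) (hp : p ∈ C) (hD : dist x p ≤ D)
    (hρ₀ : 0 < ρ) (hρs : ρ ≤ s) (hρR : ρ * (D + s) ≤ R * s) :
    ∃ y, closedBall y ρ ⊆ C ∩ closedBall p R := by
  have hs : 0 < s := hρ₀.trans_le hρs
  set θ := ρ / s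
  have hθρ : θ * s = ρ := div_mul_cancel₀ ρ hs.ne'
  have hθ₀ : 0 ≤ θ := by positivity
  refine ⟨θ • x + (1 - θ) • p, ?_⟩
  rw [← hθρ]
  refine Set.subset_inter (hC.closedBall_combo_subset hs.le hθ₀ ?_ hx hp)
    (closedBall_subset_closedBall' ?_)
  · exact (div_le_one hs).2 hρs
  · have hdist : dist (θ • x + (1 - θ) • p) p = θ * dist x p := by
      rw [dist_eq_norm, dist_eq_norm, ← norm_smul_of_nonneg hθ₀]
      congr 1
      module
    rw [hdist]
    calc θ * s + θ * dist x p ≤ θ * (D + s) := by rw [add_comm, ← mul_add]; gcongr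
      _ = ρ * (D + s) / s := by ring
      _ ≤ R := (div_le_iff₀ hs).2 hρR

theorem Convex.setOf_closedBall_subset {A : Set E} (hA : Convex ℝ A) (ρ : ℝ) :
    Convex ℝ {y | closedBall y ρ ⊆ A} := by
  intro y hy z hz a b ha hb hab w hw
  obtain ⟨d, rfl⟩ : ∃ d, w = a • y + b • z + d := ⟨w - (a • y + b • z), by abel⟩
  have hd : ‖d‖ ≤ ρ := by simpa using hw
  rw [← Convex.combo_self hab d, add_add_add_comm, ← smul_add, ← smul_add]
  exact hA (hy (by simpa using hd)) (hz (by simpa using hd)) ha hb hab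

theorem exists_closedBall_subset_biInter_of_forall_card_le [FiniteDimensional ℝ E] {ι : Type*}
    {A : ι → Set E} {s : Finset ι} {ρ : ℝ} (hA : ∀ i ∈ s, Convex ℝ (A i))
    (h : ∀ I ⊆ s, #I ≤ finrank ℝ E + 1 → ∃ x, closedBall x ρ ⊆ ⋂ i ∈ I, A i) :
    ∃ x, closedBall x ρ ⊆ ⋂ i ∈ s, A i := by
  simp_rw [Set.subset_iInter₂_iff] at h ⊢
  obtain ⟨x, hx⟩ := Convex.helly_theorem' (F := fun i => {y | closedBall y ρ ⊆ A i})
    (fun i hi => (hA i hi).setOf_closedBall_subset ρ) fun I hI hcard => by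
      simpa [Set.Nonempty] using h I hI hcard
  exact ⟨x, by simpa using hx⟩

theorem exists_closedBall_subset_biInter_of_chain {A : ℕ → Set E} {c : ℕ → E} {R : ℕ → ℝ}
    {μ : ℝ} (hμ₀ : 0 < μ) (hμ₁ : μ ≤ 1) (hR₀ : ∀ k, 0 < R k) (hR : Antitone R)
    (hA : ∀ k, Convex ℝ (A k)) (hAR : ∀ k, A k ⊆ closedBall (c k) (R k))
    (hμA : ∀ k, closedBall (c k) (μ * R k) ⊆ A k)
    (hRA : ∀ k ≠ 0, closedBall (c k) (R k) ⊆ A k) (hc : ∀ i j, i ≤ j → c j ∈ A i)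
    (I : Finset ℕ) {k : ℕ} (hk : IsGreatest (I : Set ℕ) k) :
    ∃ x, closedBall x (μ * R k / (2 ^ #I - 1)) ⊆ ⋂ i ∈ I, A i := by
  induction I using Finset.induction_on_max generalizing k with
  | empty => exact absurd (mem_coe.1 hk.1) (notMem_empty k)
  | insert a s has ih =>
    obtain rfl : k = a := by
      rcases (Finset.mem_insert.1 hk.1) with rfl | hks
      · rfl
      · exact absurd (hk.2 (mem_insert_self a s)) (has k hks).not_ge
    rw [card_insert_of_notMem fun hks => (has k hks).false, set_biInter_insert]
    rcases s.eq_empty_or_nonempty with rfl | hs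
    · exact ⟨c k, by norm_num [hμA k]⟩
    set k' := s.max' hs
    have hk'k : k' < k := has k' (s.max'_mem hs)
    obtain ⟨x, hx⟩ := ih (s.isGreatest_max' hs)
    have hN : (1 : ℝ) ≤ 2 ^ #s - 1 := by
      have : (2 : ℝ) ≤ 2 ^ #s := le_self_pow₀ one_le_two (card_ne_zero.2 hs)
      linarith
    have hρ₀ : 0 < μ * R k / (2 * (2 ^ #s - 1) + 1) := by have := hR₀ k; positivity
    obtain ⟨hρs, hρR⟩ := halving_radius_bounds hμ₀ hμ₁ hN (hR₀ k) (hR hk'k.le)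
    have hxk' : x ∈ A k' := Set.mem_iInter₂.1 (hx (mem_closedBall_self (hρ₀.le.trans hρs))) k'
      (s.max'_mem hs)
    -- `x` and `c k` both lie in `A k'`, whose diameter is at most `2 R k'`
    have hdist : dist x (c k) ≤ 2 * R k' := by
      have h₁ := hAR k' hxk'
      have h₂ := hAR k' (hc k' k hk'k.le)
      rw [mem_closedBall] at h₁ h₂
      linarith [dist_triangle_right x (c k) (c k')]
    obtain ⟨y, hy⟩ := (convex_iInter₂ fun i _ => hA i).exists_closedBall_subset_inter_closedBall
      hx (Set.mem_iInter₂.2 fun i hi => hc i k (has i hi).le) hdist hρ₀ hρs hρR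
    refine ⟨y, ?_⟩
    rw [show (2 : ℝ) ^ (#s + 1) - 1 = 2 * (2 ^ #s - 1) + 1 by ring, Set.inter_comm]
    exact hy.trans (Set.inter_subset_inter_right _ (hRA k (by omega)))

end Geometry

section WeightedSum

variable {E : Type*} [NormedAddCommGroup E] [NormedSpace ℝ E]

/-- The paper's `v_{h,k}`, with the two indices in the opposite order. -/
noncomputable def weightedSum (τ : ℝ) (u : ℕ → E) (k h : ℕ) : E :=
  ∑ j ∈ Ico k h, τ ^ j • u j

theorem weightedSum_of_le {τ : ℝ} {u : ℕ → E} {k h : ℕ} (hhk : h ≤ k) :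
    weightedSum τ u k h = 0 := by
  rw [weightedSum, Ico_eq_empty_of_le hhk, sum_empty]

theorem weightedSum_succ {τ : ℝ} {u : ℕ → E} {k h : ℕ} (hkh : k ≤ h) :
    weightedSum τ u k (h + 1) = τ ^ h • u h + weightedSum τ u k h := by
  rw [weightedSum, sum_Ico_succ_top hkh, add_comm, weightedSum]

theorem weightedSum_add_weightedSum {τ : ℝ} {u : ℕ → E} {i j h : ℕ} (hij : i ≤ j) (hjh : j ≤ h) :
    weightedSum τ u i j + weightedSum τ u j h = weightedSum τ u i h :=
  sum_Ico_consecutive _ hij hjh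

end WeightedSum

section ConstraintSet

variable {E : Type*} [NormedAddCommGroup E]

def constraintSet (τ : ℝ) (K : Set E) (k : ℕ) : Set E :=
  if k = 0 then K else closedBall 0 (τ ^ k)

theorem constraintSet_of_ne_zero (τ : ℝ) (K : Set E) {k : ℕ} (hk : k ≠ 0) :
    constraintSet τ K k = closedBall 0 (τ ^ k) :=
  if_neg hk

theorem convex_constraintSet [NormedSpace ℝ E] {K : Set E} (hK : Convex ℝ K) (τ : ℝ) (k : ℕ) :
    Convex ℝ (constraintSet τ K k) := by
  unfold constraintSet
  split_ifs
  exacts [hK, convex_closedBall _ _]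

theorem zero_mem_constraintSet {K : Set E} (hK : (0 : E) ∈ K) {τ : ℝ} (hτ : 0 ≤ τ) (k : ℕ) :
    (0 : E) ∈ constraintSet τ K k := by
  unfold constraintSet
  split_ifs
  exacts [hK, mem_closedBall_self (pow_nonneg hτ k)]

theorem constraintSet_subset_closedBall {K : Set E} (hK : K ⊆ closedBall 0 1) (τ : ℝ) (k : ℕ) :
    constraintSet τ K k ⊆ closedBall 0 (τ ^ k) := by
  unfold constraintSet
  split_ifs with hk
  exacts [by simpa [hk] using hK, subset_rfl]

theorem closedBall_subset_constraintSet {K : Set E} {μ τ : ℝ} (hμK : closedBall 0 μ ⊆ K)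
    (hμ : μ ≤ 1) (hτ : 0 ≤ τ) (k : ℕ) :
    closedBall 0 (μ * τ ^ k) ⊆ constraintSet τ K k := by
  unfold constraintSet
  split_ifs with hk
  · simpa [hk] using hμK
  · exact closedBall_subset_closedBall (mul_le_of_le_one_left (pow_nonneg hτ k) hμ)

end ConstraintSet

section Recursion

variable {E : Type*} [NormedAddCommGroup E] [NormedSpace ℝ E]
  {τ : ℝ} {K : Set E} {u : ℕ → E} {J : ℕ → Set E}

theorem mem_recursion_succ_iff (hτ : τ ≠ 0)
    (hJ : ∀ h : ℕ, J (h + 1) = (τ⁻¹ • ((fun x => x - u h) '' J h)) ∩ closedBall 0 1)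
    {h : ℕ} {x : E} : x ∈ J (h + 1) ↔ τ • x + u h ∈ J h ∧ ‖x‖ ≤ 1 := by
  rw [hJ, Set.mem_inter_iff, Set.mem_inv_smul_set_iff₀ hτ, mem_closedBall_zero_iff]
  simp [sub_eq_iff_eq_add]

theorem mem_recursion_iff (hτ : 0 < τ) (hJ0 : J 0 = K)
    (hJ : ∀ h : ℕ, J (h + 1) = (τ⁻¹ • ((fun x => x - u h) '' J h)) ∩ closedBall 0 1)
    (h : ℕ) (x : E) :
    x ∈ J h ↔ ∀ k ≤ h, τ ^ h • x + weightedSum τ u k h ∈ constraintSet τ K k := by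
  induction h generalizing x with
  | zero => simp [hJ0, weightedSum_of_le, constraintSet]
  | succ h ih =>
    rw [mem_recursion_succ_iff hτ.ne' hJ, ih]
    simp only [Nat.le_succ_iff, or_imp, forall_and, forall_eq]
    refine and_congr (forall₂_congr fun k hk => ?_) ?_
    · rw [weightedSum_succ hk, smul_add, smul_smul, ← pow_succ, add_assoc]
    · rw [weightedSum_of_le le_rfl, add_zero, constraintSet_of_ne_zero _ _ h.succ_ne_zero,
        mem_closedBall_zero_iff, norm_smul, Real.norm_of_nonneg (by positivity)]
      exact (mul_le_iff_le_one_right (by positivity)).symm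

theorem weightedSum_mem_constraintSet (hτ : 0 < τ) (hJ0 : J 0 = K)
    (hJ : ∀ h : ℕ, J (h + 1) = (τ⁻¹ • ((fun x => x - u h) '' J h)) ∩ closedBall 0 1)
    (hu : ∀ h, u h ∈ J h) (hK : (0 : E) ∈ K) (k h : ℕ) :
    weightedSum τ u k h ∈ constraintSet τ K k := by
  induction h with
  | zero => rw [weightedSum_of_le (Nat.zero_le k)]; exact zero_mem_constraintSet hK hτ.le k
  | succ h ih =>
    rcases le_or_gt k h with hkh | hhk
    · rw [weightedSum_succ hkh]
      exact (mem_recursion_iff hτ hJ0 hJ h (u h)).1 (hu h) k hkh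
    · rw [weightedSum_of_le hhk]; exact zero_mem_constraintSet hK hτ.le k

theorem sub_weightedSum_mem_constraintSet (hτ : 0 < τ) (hJ0 : J 0 = K)
    (hJ : ∀ h : ℕ, J (h + 1) = (τ⁻¹ • ((fun x => x - u h) '' J h)) ∩ closedBall 0 1)
    (hu : ∀ h, u h ∈ J h) (hK : (0 : E) ∈ K) {i j : ℕ} (hij : i ≤ j) (h : ℕ) :
    weightedSum τ u i h - weightedSum τ u j h ∈ constraintSet τ K i := by
  rcases le_total j h with hjh | hhj
  · rw [← weightedSum_add_weightedSum hij hjh, add_sub_cancel_right]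
    exact weightedSum_mem_constraintSet hτ hJ0 hJ hu hK i j
  · rw [weightedSum_of_le hhj, sub_zero]
    exact weightedSum_mem_constraintSet hτ hJ0 hJ hu hK i h

theorem exists_closedBall_subset_biInter_constraintSet (hτ₀ : 0 < τ) (hτ₁ : τ ≤ 1)
    (hK : Convex ℝ K) {μ : ℝ} (hμ₀ : 0 < μ) (hμ₁ : μ ≤ 1) (hμK : closedBall 0 μ ⊆ K)
    (hK1 : K ⊆ closedBall 0 1) (hJ0 : J 0 = K)
    (hJ : ∀ h : ℕ, J (h + 1) = (τ⁻¹ • ((fun x => x - u h) '' J h)) ∩ closedBall 0 1)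
    (hu : ∀ h, u h ∈ J h) {h n : ℕ} {I : Finset ℕ} (hIh : ∀ k ∈ I, k ≤ h) (hIn : #I ≤ n) :
    ∃ x, closedBall x (μ * τ ^ h / 2 ^ n) ⊆
      ⋂ k ∈ I, (· + weightedSum τ u k h) ⁻¹' constraintSet τ K k := by
  rcases I.eq_empty_or_nonempty with rfl | hI
  · exact ⟨0, by simp⟩
  have hK0 : (0 : E) ∈ K := hμK (mem_closedBall_self hμ₀.le)
  have hpre : ∀ k r, (· + weightedSum τ u k h) ⁻¹' closedBall 0 r =
      closedBall (-weightedSum τ u k h) r := by simp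
  obtain ⟨x, hx⟩ := exists_closedBall_subset_biInter_of_chain (R := (τ ^ ·)) hμ₀ hμ₁
    (fun k => pow_pos hτ₀ k) (fun _ _ => pow_le_pow_of_le_one hτ₀.le hτ₁)
    (fun k => (convex_constraintSet hK τ k).translate_preimage_left _)
    (fun k => hpre k _ ▸ Set.preimage_mono (constraintSet_subset_closedBall hK1 τ k))
    (fun k => hpre k _ ▸ Set.preimage_mono (closedBall_subset_constraintSet hμK hμ₁ hτ₀.le k))
    (fun k hk => hpre k _ ▸ Set.preimage_mono (constraintSet_of_ne_zero τ K hk).ge)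
    (fun i j hij => by
      simpa [neg_add_eq_sub] using sub_weightedSum_mem_constraintSet hτ₀ hJ0 hJ hu hK0 hij h)
    I (I.isGreatest_max' hI)
  refine ⟨x, (closedBall_subset_closedBall ?_).trans hx⟩
  have hN : (2 : ℝ) ^ #I - 1 ≤ 2 ^ n := by
    linarith [pow_le_pow_right₀ (one_le_two (α := ℝ)) hIn]
  have hN₀ : (0 : ℝ) < 2 ^ #I - 1 := by
    linarith [one_lt_pow₀ (one_lt_two (α := ℝ)) (card_ne_zero.2 hI)]
  calc μ * τ ^ h / 2 ^ n ≤ μ * τ ^ I.max' hI / 2 ^ n := by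
        gcongr μ * ?_ / _
        exact pow_le_pow_of_le_one hτ₀.le hτ₁ (hIh _ (I.max'_mem hI))
    _ ≤ μ * τ ^ I.max' hI / (2 ^ #I - 1) := by gcongr

end Recursion

theorem recursion_contains_ball_general
    {E : Type*} [NormedAddCommGroup E] [NormedSpace ℝ E] [FiniteDimensional ℝ E]
    (τ : ℝ) (hτ : τ ∈ Set.Ioo (0:ℝ) 1)
    (K : Set E) (hKconv : Convex ℝ K)
    (ε : ℝ) (hε : 0 < ε)
    (hεK : Metric.closedBall (0 : E) ε ⊆ K) (hK1 : K ⊆ Metric.closedBall 0 1)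
    (u : ℕ → E) (J : ℕ → Set E)
    (hJ0 : J 0 = K)
    (hJ : ∀ h : ℕ, J (h + 1)
        = (τ⁻¹ • ((fun x => x - u h) '' J h)) ∩ Metric.closedBall 0 1)
    (hu : ∀ h, u h ∈ J h) :
    ∀ h : ℕ, ∃ c : E,
      Metric.closedBall c (min ε 1 * ((2:ℝ) ^ (Module.finrank ℝ E + 1))⁻¹) ⊆ J h := by
  obtain ⟨hτ₀, hτ₁⟩ := hτ
  intro h
  set μ := min ε 1
  have hμK : closedBall 0 μ ⊆ K := (closedBall_subset_closedBall (min_le_left ε 1)).trans hεK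
  obtain ⟨y, hy⟩ := exists_closedBall_subset_biInter_of_forall_card_le
    (s := range (h + 1)) (ρ := μ * τ ^ h / 2 ^ (finrank ℝ E + 1))
    (fun k _ => (convex_constraintSet hKconv τ k).translate_preimage_left _)
    fun I hI hcard => exists_closedBall_subset_biInter_constraintSet hτ₀ hτ₁.le hKconv
      (lt_min hε one_pos) (min_le_right ε 1) hμK hK1 hJ0 hJ hu
      (fun k hk => Nat.lt_succ_iff.1 (mem_range.1 (hI hk))) hcard
  refine ⟨(τ ^ h)⁻¹ • y, fun z hz => ?_⟩
  have hτh : 0 < τ ^ h := pow_pos hτ₀ h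
  have hzy : τ ^ h • z ∈ closedBall y (μ * τ ^ h / 2 ^ (finrank ℝ E + 1)) := by
    rw [mem_closedBall, ← smul_inv_smul₀ hτh.ne' y, dist_smul₀, Real.norm_of_nonneg hτh.le]
    have hz' := mem_closedBall.1 hz
    calc τ ^ h * dist z ((τ ^ h)⁻¹ • y) ≤ τ ^ h * (μ * (2 ^ (finrank ℝ E + 1))⁻¹) := by gcongr
      _ = _ := by ring
  exact (mem_recursion_iff hτ₀ hJ0 hJ h z).2 fun k hk =>
    Set.mem_iInter₂.1 (hy hzy) k (mem_range.2 (Nat.lt_succ_of_le hk))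

/-- Deterministic core of Proposition 3.3: along the recursion
`Ĵ₀ = K`, `Ĵ_{h+1} = τ⁻¹(Ĵ_h - u_h) ∩ B_1` with `u_h ∈ Ĵ_h`, where
`B_ε ⊆ K ⊆ B_1` is a convex body, every `Ĵ_h` contains a closed ball of radius
`r = min(ε,1)·2^{-(d+1)}`, `d` the dimension. -/
theorem recursion_contains_ball
    {E : Type*} [NormedAddCommGroup E] [NormedSpace ℝ E] [FiniteDimensional ℝ E]
    (τ : ℝ) (hτ : τ ∈ Set.Ioo (0:ℝ) 1)
    (K : Set E) (hKconv : Convex ℝ K) (hKcomp : IsCompact K)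
    (ε : ℝ) (hε : 0 < ε)
    (hεK : Metric.closedBall (0 : E) ε ⊆ K) (hK1 : K ⊆ Metric.closedBall 0 1)
    (u : ℕ → E) (J : ℕ → Set E)
    (hJ0 : J 0 = K)
    (hJ : ∀ h : ℕ, J (h + 1)
        = (τ⁻¹ • ((fun x => x - u h) '' J h)) ∩ Metric.closedBall 0 1)
    (hu : ∀ h, u h ∈ J h) :
    ∀ h : ℕ, ∃ c : E,
      Metric.closedBall c (min ε 1 * ((2:ℝ) ^ (Module.finrank ℝ E + 1))⁻¹) ⊆ J h :=
  recursion_contains_ball_general τ hτ K hKconv ε hε hεK hK1 u J hJ0 hJ hu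
end
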